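/- Let ρ be a density matrix on (ℂ²)^{⊗N} and H = Σ_{i<j} (p_{ij}/2)·[(I + s_{ij} X_i X_j)/2 + (I + s_{ij} Z_i Z_j)/2] with p_{ij} ≥ 0, Σ p_{ij} = 1, s_{ij} ∈ {±1}. Define the following experiment: choose h ∈ {0,1} uniformly; if h = 0 measure all qubits of ρ in the computational (Z) basis, if h = 1 in the Hadamard (X) basis, obtaining outcomes m₁,…,m_N ∈ {0,1}; sample (i,j) with probability p_{ij}; accept iff (−1)^{m_i}(−1)^{m_j} = −s_{ij}. Then the acceptance probability equals 1 − Tr(ρH). -/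

import Mathlib

open Matrix BigOperators
open scoped ComplexOrder

/-- The Pauli `X` matrix. -/
def Xmat : Matrix (Fin 2) (Fin 2) ℂ := !![0, 1; 1, 0]

/-- The Pauli `Z` matrix. -/
def Zmat : Matrix (Fin 2) (Fin 2) ℂ := !![1, 0; 0, -1]

/-- The Hadamard matrix on ℂ². -/
noncomputable def Hmat : Matrix (Fin 2) (Fin 2) ℂ :=
  (1 / (Real.sqrt 2 : ℂ)) • !![1, 1; 1, -1]

/-- The `N`-fold tensor power `H^{⊗N}` of the Hadamard matrix. -/
noncomputable def HN (N : ℕ) : Matrix (Fin N → Fin 2) (Fin N → Fin 2) ℂ :=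
  fun f g => ∏ j : Fin N, Hmat (f j) (g j)

/-- The single-qubit operator `M` acting on qubit `i`, identity elsewhere. -/
def pauliAt (N : ℕ) (i : Fin N) (M : Matrix (Fin 2) (Fin 2) ℂ) :
    Matrix (Fin N → Fin 2) (Fin N → Fin 2) ℂ :=
  fun f g => M (f i) (g i) * ∏ j ∈ Finset.univ.erase i, (if f j = g j then 1 else 0)

/-- The 2-local `XZ`-Hamiltonian
`H = Σ_{i<j} (p_{ij}/2)·[(I + s_{ij}X_iX_j)/2 + (I + s_{ij}Z_iZ_j)/2]`. -/
noncomputable def xzHam (N : ℕ) (p : Fin N → Fin N → ℝ) (s : Fin N → Fin N → ℝ) :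
    Matrix (Fin N → Fin 2) (Fin N → Fin 2) ℂ :=
  ∑ i : Fin N, ∑ j : Fin N,
    if i < j then
      ((p i j : ℂ) / 2) •
        ((1 / 2 : ℂ) • (1 + (s i j : ℂ) • (pauliAt N i Xmat * pauliAt N j Xmat)) +
         (1 / 2 : ℂ) • (1 + (s i j : ℂ) • (pauliAt N i Zmat * pauliAt N j Zmat)))
    else 0

/-!
`Z_i Z_j` is diagonal with entries `(-1)^{m_i} (-1)^{m_j}`, and conjugation by `H^{⊗N}` turns
`Z_i` into `X_i`; hence `Re Tr(ρ Z_i Z_j)` and `Re Tr(ρ X_i X_j)` are the correlations of the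
outcome signs under the two measurement distributions. For signs `s, c ∈ {±1}` the acceptance
indicator `[c = -s]` equals `(1 - s c)/2`, so for each pair `(i, j)` the acceptance probability and
the energy `Tr(ρ H)` contribute `p_{ij}` together, and these sum to `1`.
-/

namespace Matrix

variable {ι n R : Type*} [Fintype ι] [CommSemiring R]

def piKronecker (U : ι → Matrix n n R) : Matrix (ι → n) (ι → n) R :=
  of fun f g => ∏ i, U i (f i) (g i)

@[simp]
lemma piKronecker_apply (U : ι → Matrix n n R) (f g : ι → n) :
    piKronecker U f g = ∏ i, U i (f i) (g i) := rfl

lemma piKronecker_mul [DecidableEq ι] [Fintype n] (U V : ι → Matrix n n R) :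
    piKronecker U * piKronecker V = piKronecker fun i => U i * V i := by
  ext f g
  simp only [mul_apply, piKronecker_apply, ← Finset.prod_mul_distrib, Fintype.prod_sum]

lemma piKronecker_diagonal [DecidableEq n] (d : ι → n → R) :
    piKronecker (fun i => diagonal (d i)) = diagonal fun f => ∏ i, d i (f i) := by
  ext f g
  simp only [piKronecker_apply, diagonal_apply, Fintype.prod_ite_zero, funext_iff]

lemma piKronecker_one [DecidableEq n] : piKronecker (fun _ : ι => (1 : Matrix n n R)) = 1 := by
  simpa [diagonal_one] using piKronecker_diagonal (ι := ι) (fun _ => (1 : n → R))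

lemma piKronecker_mulSingle_diagonal [DecidableEq ι] [DecidableEq n] (i : ι) (d : n → R) :
    piKronecker (Pi.mulSingle i (diagonal d)) = diagonal fun f => d (f i) := by
  have h_diag : Pi.mulSingle i (diagonal d) =
      fun j => diagonal (Pi.mulSingle (M := fun _ => n → R) i d j) := by
    ext1 j
    by_cases h : j = i
    · subst h; simp
    · simp [h]
  rw [h_diag, piKronecker_diagonal]
  congr 1
  ext f
  rw [Fintype.prod_eq_single i fun j hj => by simp [hj]]
  simp

lemma trace_mul_diagonal {m : Type*} [Fintype m] [DecidableEq m] (A : Matrix m m R)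
    (d : m → R) : (A * diagonal d).trace = ∑ i, A i i * d i := by
  simp [trace, mul_diagonal]

lemma re_trace {m : Type*} [Fintype m] (A : Matrix m m ℂ) :
    A.trace.re = ∑ i, (A i i).re :=
  Complex.re_sum _ _

end Matrix

lemma pauliAt_eq_piKronecker (N : ℕ) (i : Fin N) (M : Matrix (Fin 2) (Fin 2) ℂ) :
    pauliAt N i M = piKronecker (Pi.mulSingle i M) := by
  ext f g
  rw [pauliAt, piKronecker_apply, ← Finset.mul_prod_erase _ _ (Finset.mem_univ i)]
  congr 1
  · simp
  · refine Finset.prod_congr rfl fun j hj => ?_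
    simp [Pi.mulSingle_eq_of_ne (Finset.ne_of_mem_erase hj), one_apply]

lemma HN_eq_piKronecker (N : ℕ) : HN N = piKronecker fun _ => Hmat := rfl

lemma Hmat_mul_Hmat : Hmat * Hmat = 1 := by
  have h : (Real.sqrt 2 : ℂ) ^ 2 = 2 := by
    rw [← Complex.ofReal_pow, Real.sq_sqrt zero_le_two, Complex.ofReal_ofNat]
  ext a b
  fin_cases a <;> fin_cases b <;>
    simp [Hmat, mul_apply, Fin.sum_univ_two, ← sq, h] <;> norm_num

lemma Hmat_mul_Zmat_mul_Hmat : Hmat * Zmat * Hmat = Xmat := by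
  have h : (Real.sqrt 2 : ℂ) ^ 2 = 2 := by
    rw [← Complex.ofReal_pow, Real.sq_sqrt zero_le_two, Complex.ofReal_ofNat]
  ext a b
  fin_cases a <;> fin_cases b <;>
    simp [Hmat, Zmat, Xmat, mul_apply, Fin.sum_univ_two, ← sq, h] <;> norm_num

lemma HN_mul_HN (N : ℕ) : HN N * HN N = 1 := by
  rw [HN_eq_piKronecker, piKronecker_mul, Hmat_mul_Hmat, piKronecker_one]

lemma trace_HN_mul_mul_HN (N : ℕ) (ρ : Matrix (Fin N → Fin 2) (Fin N → Fin 2) ℂ) :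
    (HN N * ρ * HN N).trace = ρ.trace := by
  rw [trace_mul_cycle, HN_mul_HN, Matrix.one_mul]

lemma HN_mul_pauliAt_mul_HN (N : ℕ) (i : Fin N) (M : Matrix (Fin 2) (Fin 2) ℂ) :
    HN N * pauliAt N i M * HN N = pauliAt N i (Hmat * M * Hmat) := by
  simp only [HN_eq_piKronecker, pauliAt_eq_piKronecker, piKronecker_mul]
  congr 1
  ext1 j
  by_cases h : j = i
  · subst h; simp
  · simp [h, Hmat_mul_Hmat]

lemma Zmat_eq_diagonal :
    Zmat = diagonal fun a : Fin 2 => (((-1 : ℝ) ^ (a : ℕ) : ℝ) : ℂ) := by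
  ext a b
  fin_cases a <;> fin_cases b <;> simp [Zmat]

lemma pauliAt_Z_mul_pauliAt_Z (N : ℕ) (i j : Fin N) :
    pauliAt N i Zmat * pauliAt N j Zmat =
      diagonal fun m => (((-1 : ℝ) ^ (m i : ℕ) * (-1) ^ (m j : ℕ) : ℝ) : ℂ) := by
  simp only [pauliAt_eq_piKronecker, Zmat_eq_diagonal, piKronecker_mulSingle_diagonal,
    diagonal_mul_diagonal, Complex.ofReal_mul]

lemma pauliAt_X_mul_pauliAt_X (N : ℕ) (i j : Fin N) :
    pauliAt N i Xmat * pauliAt N j Xmat =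
      HN N * (pauliAt N i Zmat * pauliAt N j Zmat) * HN N := by
  rw [← Hmat_mul_Zmat_mul_Hmat, ← HN_mul_pauliAt_mul_HN, ← HN_mul_pauliAt_mul_HN]
  simp only [Matrix.mul_assoc, ← Matrix.mul_assoc (HN N) (HN N), HN_mul_HN, Matrix.one_mul]

def zzCorrelation {ι : Type*} [Fintype ι] [DecidableEq ι] (w : (ι → Fin 2) → ℝ) (i j : ι) :
    ℝ :=
  ∑ m, w m * ((-1 : ℝ) ^ (m i : ℕ) * (-1) ^ (m j : ℕ))

lemma re_trace_mul_pauliAt_Z_mul_pauliAt_Z (N : ℕ)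
    (σ : Matrix (Fin N → Fin 2) (Fin N → Fin 2) ℂ) (i j : Fin N) :
    (σ * (pauliAt N i Zmat * pauliAt N j Zmat)).trace.re =
      zzCorrelation (fun m => (σ m m).re) i j := by
  simp only [pauliAt_Z_mul_pauliAt_Z, trace_mul_diagonal, Complex.re_sum, Complex.re_mul_ofReal,
    zzCorrelation]

lemma re_trace_mul_pauliAt_X_mul_pauliAt_X (N : ℕ)
    (ρ : Matrix (Fin N → Fin 2) (Fin N → Fin 2) ℂ) (i j : Fin N) :
    (ρ * (pauliAt N i Xmat * pauliAt N j Xmat)).trace.re =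
      zzCorrelation (fun m => ((HN N * ρ * HN N) m m).re) i j := by
  rw [← re_trace_mul_pauliAt_Z_mul_pauliAt_Z, pauliAt_X_mul_pauliAt_X, ← Matrix.mul_assoc,
    trace_mul_comm]
  simp only [Matrix.mul_assoc]

lemma re_trace_mul_xzHam (N : ℕ) (ρ : Matrix (Fin N → Fin 2) (Fin N → Fin 2) ℂ)
    (hρtr : ρ.trace.re = 1) (p s : Fin N → Fin N → ℝ) :
    (ρ * xzHam N p s).trace.re =
      ∑ i, ∑ j, if i < j then p i j / 2 * (1 + s i j *
        (zzCorrelation (fun m => ((HN N * ρ * HN N) m m).re) i j +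
          zzCorrelation (fun m => (ρ m m).re) i j) / 2) else 0 := by
  simp only [xzHam, Matrix.mul_sum, trace_sum, Complex.re_sum]
  refine Finset.sum_congr rfl fun i _ => Finset.sum_congr rfl fun j _ => ?_
  split_ifs
  · simp [Matrix.mul_add, Complex.mul_re, hρtr, re_trace_mul_pauliAt_X_mul_pauliAt_X,
      re_trace_mul_pauliAt_Z_mul_pauliAt_Z]
    ring
  · simp

lemma ite_eq_neg_eq_one_sub_mul_div_two {K : Type*} [Field K] [CharZero K] [DecidableEq K]
    {s c : K} (hs : s = 1 ∨ s = -1) (hc : c = 1 ∨ c = -1) :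
    (if c = -s then 1 else 0 : K) = (1 - s * c) / 2 := by
  rcases hs with rfl | rfl <;> rcases hc with rfl | rfl <;> norm_num

lemma expected_acceptance_eq {ι : Type*} [Fintype ι] [LinearOrder ι] (w : (ι → Fin 2) → ℝ)
    (hw : ∑ m, w m = 1) (p s : ι → ι → ℝ) (hs : ∀ i j, s i j = 1 ∨ s i j = -1) :
    ∑ m, w m * ∑ i, ∑ j, (if i < j then
        p i j * (if (-1 : ℝ) ^ (m i : ℕ) * (-1) ^ (m j : ℕ) = -s i j then 1 else 0) else 0) =
      ∑ i, ∑ j, if i < j then p i j / 2 * (1 - s i j * zzCorrelation w i j) else 0 := by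
  simp only [Finset.mul_sum]
  rw [Finset.sum_comm]
  refine Finset.sum_congr rfl fun i _ => ?_
  rw [Finset.sum_comm]
  refine Finset.sum_congr rfl fun j _ => ?_
  split_ifs
  · have hc (m : ι → Fin 2) : (-1 : ℝ) ^ (m i : ℕ) * (-1) ^ (m j : ℕ) = 1 ∨
        (-1 : ℝ) ^ (m i : ℕ) * (-1) ^ (m j : ℕ) = -1 := by
      rw [← pow_add]; exact neg_one_pow_eq_or ℝ _
    simp only [ite_eq_neg_eq_one_sub_mul_div_two (hs i j) (hc _)]
    conv_rhs => rw [← hw]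
    simp only [zzCorrelation, Finset.mul_sum, ← Finset.sum_sub_distrib]
    exact Finset.sum_congr rfl fun m _ => by ring
  · simp

theorem posthoc_acceptance_probability_general (N : ℕ)
    (ρ : Matrix (Fin N → Fin 2) (Fin N → Fin 2) ℂ)
    (hρtr : ρ.trace = 1)
    (p : Fin N → Fin N → ℝ) (s : Fin N → Fin N → ℝ)
    (hpsum : ∑ i : Fin N, ∑ j : Fin N, (if i < j then p i j else 0) = 1)
    (hs : ∀ i j, s i j = 1 ∨ s i j = -1) :
    (1 / 2 : ℝ) * ∑ h : Fin 2, ∑ m : Fin N → Fin 2,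
        (if h = 0 then (ρ m m).re else ((HN N * ρ * HN N) m m).re) *
          ∑ i : Fin N, ∑ j : Fin N,
            (if i < j then
              p i j * (if ((-1 : ℝ) ^ (m i : ℕ)) * ((-1 : ℝ) ^ (m j : ℕ)) = -(s i j) then 1 else 0)
            else 0)
      = 1 - (ρ * xzHam N p s).trace.re := by
  have hre : ρ.trace.re = 1 := by rw [hρtr, Complex.one_re]
  have hZ : ∑ m, (ρ m m).re = 1 := by rw [← re_trace, hre]
  have hX : ∑ m, ((HN N * ρ * HN N) m m).re = 1 := by rw [← re_trace, trace_HN_mul_mul_HN, hre]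
  simp only [Fin.sum_univ_two, Fin.isValue, ↓reduceIte, one_ne_zero]
  rw [expected_acceptance_eq _ hZ p s hs, expected_acceptance_eq _ hX p s hs,
    re_trace_mul_xzHam N ρ hre]
  refine eq_sub_of_add_eq (Eq.trans ?_ hpsum)
  simp only [Finset.mul_sum, ← Finset.sum_add_distrib]
  refine Finset.sum_congr rfl fun i _ => Finset.sum_congr rfl fun j _ => ?_
  split_ifs <;> ring

/-- The acceptance probability of the posthoc verification experiment:
choose `h ∈ {0,1}` uniformly; measure all qubits of `ρ` in the computational
basis if `h = 0` and in the Hadamard basis if `h = 1`, obtaining outcomes `m`;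
sample `(i,j)` with probability `p_{ij}`; accept iff
`(−1)^{m_i}(−1)^{m_j} = −s_{ij}`.  It equals `1 − Tr(ρH)`. -/
theorem posthoc_acceptance_probability (N : ℕ)
    (ρ : Matrix (Fin N → Fin 2) (Fin N → Fin 2) ℂ)
    (hρ : ρ.PosSemidef) (hρtr : ρ.trace = 1)
    (p : Fin N → Fin N → ℝ) (s : Fin N → Fin N → ℝ)
    (hp : ∀ i j, 0 ≤ p i j)
    (hpsum : ∑ i : Fin N, ∑ j : Fin N, (if i < j then p i j else 0) = 1)
    (hs : ∀ i j, s i j = 1 ∨ s i j = -1) :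
    (1 / 2 : ℝ) * ∑ h : Fin 2, ∑ m : Fin N → Fin 2,
        (if h = 0 then (ρ m m).re else ((HN N * ρ * HN N) m m).re) *
          ∑ i : Fin N, ∑ j : Fin N,
            (if i < j then
              p i j * (if ((-1 : ℝ) ^ (m i : ℕ)) * ((-1 : ℝ) ^ (m j : ℕ)) = -(s i j) then 1 else 0)
            else 0)
      = 1 - (ρ * xzHam N p s).trace.re :=
  posthoc_acceptance_probability_general N ρ hρtr p s hpsum hs
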